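/- Assume the moment condition stated in the context. Then for every bounded, compactly supported Borel measurable function g : ℝ → ℂ whose set of discontinuity points has Lebesgue measure zero, lim_{j→∞} ∫_ℝ ξ_j(λ) g(λ) dλ = ∫_ℝ ξ(λ) g(λ) dλ. -/

import Mathlib

/-!
The measures `ξ_{j,±}(λ) (λ² + 1)⁻¹ dλ` are finite, and `λ ↦ (λ + i)⁻¹` maps `ℝ` homeomorphically
onto the circle `|w + i/2| = 1/2` minus the point `0`, which plays the role of `∞`. On this circle
`w w̄ = (i/2)(w - w̄)`, so every polynomial in `w` and `w̄` is a linear combination of the pure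
powers `wⁿ`, `w̄ⁿ`, whose integrals converge by hypothesis. The masses are bounded (the case
`n = 0`), so by Stone–Weierstrass the integrals of every continuous compactly supported function
converge. A bounded compactly supported function `u` that is continuous almost everywhere is
bounded below by the Lipschitz functions `x ↦ inf_y u(y) + (n + 1)|x - y|`, whose integrals tend
to that of `u` by dominated convergence; applied to `u` and `-u` this squeezes the integrals of
`u`. The theorem is this applied to `(λ² + 1) g` against the weighted measures.
-/

open MeasureTheory Filter Complex Topology

open scoped ComplexConjugate

def MomentCondition (ξp ξm : ℝ → ℝ) (ξjp ξjm : ℕ → ℝ → ℝ) : Prop :=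
  Measurable ξp ∧ Measurable ξm ∧ (∀ j, Measurable (ξjp j)) ∧ (∀ j, Measurable (ξjm j)) ∧
  (∀ l, 0 ≤ ξp l) ∧ (∀ l, 0 ≤ ξm l) ∧
  (∀ j l, 0 ≤ ξjp j l) ∧ (∀ j l, 0 ≤ ξjm j l) ∧
  Integrable (fun l : ℝ => ξp l / (l ^ 2 + 1)) ∧
  Integrable (fun l : ℝ => ξm l / (l ^ 2 + 1)) ∧
  (∀ j, Integrable (fun l : ℝ => ξjp j l / (l ^ 2 + 1))) ∧
  (∀ j, Integrable (fun l : ℝ => ξjm j l / (l ^ 2 + 1))) ∧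
  (∀ n : ℕ,
    Tendsto (fun j => ∫ l : ℝ, (ξjp j l : ℂ) * ((l : ℂ) ^ 2 + 1)⁻¹ * (((l : ℂ) + I)⁻¹) ^ n)
      atTop (𝓝 (∫ l : ℝ, (ξp l : ℂ) * ((l : ℂ) ^ 2 + 1)⁻¹ * (((l : ℂ) + I)⁻¹) ^ n)) ∧
    Tendsto (fun j => ∫ l : ℝ, (ξjp j l : ℂ) * ((l : ℂ) ^ 2 + 1)⁻¹ * (((l : ℂ) - I)⁻¹) ^ n)
      atTop (𝓝 (∫ l : ℝ, (ξp l : ℂ) * ((l : ℂ) ^ 2 + 1)⁻¹ * (((l : ℂ) - I)⁻¹) ^ n)) ∧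
    Tendsto (fun j => ∫ l : ℝ, (ξjm j l : ℂ) * ((l : ℂ) ^ 2 + 1)⁻¹ * (((l : ℂ) + I)⁻¹) ^ n)
      atTop (𝓝 (∫ l : ℝ, (ξm l : ℂ) * ((l : ℂ) ^ 2 + 1)⁻¹ * (((l : ℂ) + I)⁻¹) ^ n)) ∧
    Tendsto (fun j => ∫ l : ℝ, (ξjm j l : ℂ) * ((l : ℂ) ^ 2 + 1)⁻¹ * (((l : ℂ) - I)⁻¹) ^ n)
      atTop (𝓝 (∫ l : ℝ, (ξm l : ℂ) * ((l : ℂ) ^ 2 + 1)⁻¹ * (((l : ℂ) - I)⁻¹) ^ n)))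

namespace BoundedContinuousFunction

variable {X : Type*} [TopologicalSpace X] [MeasurableSpace X] [OpensMeasurableSpace X]

def tendstoIntegralSubmodule (μs : ℕ → Measure X) (μ : Measure X) [∀ j, IsFiniteMeasure (μs j)]
    [IsFiniteMeasure μ] : Submodule ℂ (X →ᵇ ℂ) where
  carrier := {f | Tendsto (fun j => ∫ x, f x ∂μs j) atTop (𝓝 (∫ x, f x ∂μ))}
  add_mem' {f g} hf hg := by
    simpa only [Set.mem_ofPred_eq, coe_add, Pi.add_apply, integral_add (f.integrable _)
      (g.integrable _)] using hf.add hg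
  zero_mem' := by simp
  smul_mem' c f hf := by
    simpa only [Set.mem_ofPred_eq, coe_smul, integral_smul] using hf.const_smul c

lemma lipschitzWith_integral (μ : Measure X) [IsFiniteMeasure μ] :
    LipschitzWith (μ.real Set.univ).toNNReal fun f : X →ᵇ ℂ => ∫ x, f x ∂μ := by
  refine LipschitzWith.of_dist_le_mul fun f g => ?_
  rw [dist_eq_norm, dist_eq_norm, ← integral_sub (f.integrable μ) (g.integrable μ),
    Real.coe_toNNReal _ measureReal_nonneg]
  exact (f - g).norm_integral_le_mul_norm μ

lemma isClosed_tendstoIntegralSubmodule {μs : ℕ → Measure X} {μ : Measure X}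
    [∀ j, IsFiniteMeasure (μs j)] [IsFiniteMeasure μ]
    (hμs : BddAbove (Set.range fun j => (μs j).real Set.univ)) :
    IsClosed (tendstoIntegralSubmodule μs μ : Set (X →ᵇ ℂ)) := by
  obtain ⟨C, hC⟩ := hμs
  refine Equicontinuous.isClosed_setOfPred_tendsto ?_ (lipschitzWith_integral μ).continuous
  refine (LipschitzWith.uniformEquicontinuous _ C.toNNReal fun j => ?_).equicontinuous
  exact (lipschitzWith_integral (μs j)).weaken (Real.toNNReal_le_toNNReal (hC ⟨j, rfl⟩))

end BoundedContinuousFunction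

theorem Submodule.pow_mul_pow_mem_of_mul_eq_smul_sub {R A : Type*} [CommRing R] [CommRing A]
    [Algebra R A] (L : Submodule R A) {a b : A} {c : R} (hab : a * b = c • (a - b))
    (ha : ∀ m, a ^ m ∈ L) (hb : ∀ n, b ^ n ∈ L) (m n : ℕ) : a ^ m * b ^ n ∈ L := by
  induction m generalizing n with
  | zero => simpa using hb n
  | succ m ihm =>
    induction n with
    | zero => simpa using ha (m + 1)
    | succ n ihn =>
      have : a ^ (m + 1) * b ^ (n + 1) = c • (a ^ (m + 1) * b ^ n - a ^ m * b ^ (n + 1)) := by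
        calc a ^ (m + 1) * b ^ (n + 1) = a ^ m * b ^ n * (a * b) := by ring
          _ = c • (a ^ m * b ^ n * (a - b)) := by rw [hab, mul_smul_comm]
          _ = c • (a ^ (m + 1) * b ^ n - a ^ m * b ^ (n + 1)) := by ring_nf
      rw [this]
      exact L.smul_mem c (L.sub_mem ihn (ihm (n + 1)))

theorem StarAlgebra.adjoin_singleton_le_of_mul_star {R A : Type*} [CommRing R] [StarRing R]
    [CommRing A] [StarRing A] [Algebra R A] [StarModule R A] (L : Submodule R A) {a : A} {c : R}
    (h : a * star a = c • (a - star a)) (ha : ∀ m, a ^ m ∈ L) (hb : ∀ n, star a ^ n ∈ L) :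
    Subalgebra.toSubmodule (adjoin R {a}).toSubalgebra ≤ L := by
  rw [adjoin_eq_span, Submodule.span_le, Set.star_singleton, Set.singleton_union]
  intro x hx
  obtain ⟨m, n, rfl⟩ := (Submonoid.mem_closure_pair _ _ _).1 hx
  exact L.pow_mul_pow_mem_of_mul_eq_smul_sub h ha hb m n

/-- The image of `ℝ ∪ {∞}` under `λ ↦ (λ + i)⁻¹`, with `0` the image of `∞`. -/
abbrev resolventCircle : Set ℂ := Metric.sphere (-(I / 2)) (1 / 2)

lemma mem_resolventCircle_iff {w : ℂ} :
    w ∈ resolventCircle ↔ w.re ^ 2 + w.im ^ 2 + w.im = 0 := by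
  rw [mem_sphere_iff_norm, sub_neg_eq_add, ← sq_eq_sq₀ (norm_nonneg _) (by norm_num),
    Complex.sq_norm, normSq_apply]
  simp only [add_re, div_ofNat_re, I_re, zero_div, add_zero, add_im, div_ofNat_im, I_im, one_div,
    inv_pow]
  constructor <;> intro h <;> linarith

lemma ofReal_add_I_ne_zero (l : ℝ) : (l : ℂ) + I ≠ 0 := fun h => by
  simpa using congrArg im h

lemma inv_ofReal_add_I_mem_resolventCircle (l : ℝ) : ((l : ℂ) + I)⁻¹ ∈ resolventCircle := by
  rw [mem_resolventCircle_iff]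
  simp only [inv_re, inv_im, normSq_apply, add_re, add_im, ofReal_re, ofReal_im, I_re, I_im,
    add_zero, zero_add, mul_one]
  field_simp
  ring

lemma mul_conj_of_mem_resolventCircle {w : ℂ} (hw : w ∈ resolventCircle) :
    w * conj w = I / 2 * (w - conj w) := by
  rw [mem_resolventCircle_iff] at hw
  apply Complex.ext <;> simp <;> nlinarith

lemma im_inv_of_mem_resolventCircle {w : ℂ} (hw : w ∈ resolventCircle) (hw0 : w ≠ 0) :
    (w⁻¹).im = 1 := by
  rw [mem_resolventCircle_iff] at hw
  have : normSq w ≠ 0 := normSq_eq_zero.not.2 hw0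
  rw [Complex.inv_im, div_eq_one_iff_eq this, normSq_apply]
  nlinarith

noncomputable def resolventMap : C(ℝ, resolventCircle) :=
  ⟨fun l => ⟨((l : ℂ) + I)⁻¹, inv_ofReal_add_I_mem_resolventCircle l⟩,
    ((continuous_ofReal.add continuous_const).inv₀ ofReal_add_I_ne_zero).subtype_mk _⟩

lemma exists_continuousMap_resolventCircle {φ : ℝ → ℂ} (hφ : Continuous φ)
    (hφs : HasCompactSupport φ) : ∃ F : C(resolventCircle, ℂ), ∀ l, F (resolventMap l) = φ l := by
  classical
  obtain ⟨R, hR⟩ := hφs.isCompact.isBounded.subset_closedBall 0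
  let F : resolventCircle → ℂ := fun w => if (w : ℂ) = 0 then 0 else φ (w : ℂ)⁻¹.re
  refine ⟨⟨F, continuous_iff_continuousAt.2 fun w => ?_⟩, fun l => ?_⟩
  · by_cases hw : (w : ℂ) = 0
    · have hsmall : ∀ᶠ v : resolventCircle in 𝓝 w, ‖(v : ℂ)‖ < (|R| + 1)⁻¹ :=
        (continuous_subtype_val.norm.tendsto w).eventually
          (gt_mem_nhds (by rw [hw, norm_zero]; positivity))
      refine (continuousAt_const (y := (0 : ℂ))).congr (hsmall.mono fun v hv => ?_)
      by_cases hv0 : (v : ℂ) = 0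
      · simp [F, hv0]
      · -- a point of the circle near `0` is the image of a point of `ℝ` far from `0`
        have hinv : |R| + 1 < ‖(v : ℂ)⁻¹‖ := by
          rw [norm_inv]; exact (lt_inv_comm₀ (norm_pos_iff.2 hv0) (by positivity)).1 hv
        have hre : R < |(v : ℂ)⁻¹.re| := by
          have := norm_le_abs_re_add_abs_im (v : ℂ)⁻¹
          rw [im_inv_of_mem_resolventCircle v.2 hv0] at this
          linarith [le_abs_self R]
        symm
        simp only [F, if_neg hv0]
        refine image_eq_zero_of_notMem_tsupport fun hmem => ?_
        have := hR hmem
        rw [Metric.mem_closedBall, Real.dist_0_eq_abs] at this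
        linarith
    · have : ContinuousAt (fun v : resolventCircle => φ (v : ℂ)⁻¹.re) w :=
        hφ.continuousAt.comp (continuous_re.continuousAt.comp
          ((continuousAt_inv₀ hw).comp continuous_subtype_val.continuousAt))
      refine this.congr ?_
      filter_upwards [continuous_subtype_val.continuousAt.eventually_ne hw] with v hv
      simp [F, hv]
  · simp [F, resolventMap, ofReal_add_I_ne_zero]

open BoundedContinuousFunction in
theorem tendsto_integral_of_tendsto_resolvent_moments {μs : ℕ → Measure ℝ} {μ : Measure ℝ}
    [∀ j, IsFiniteMeasure (μs j)] [IsFiniteMeasure μ]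
    (hplus : ∀ n : ℕ, Tendsto (fun j => ∫ l, ((l : ℂ) + I)⁻¹ ^ n ∂μs j) atTop
      (𝓝 (∫ l, ((l : ℂ) + I)⁻¹ ^ n ∂μ)))
    (hminus : ∀ n : ℕ, Tendsto (fun j => ∫ l, ((l : ℂ) - I)⁻¹ ^ n ∂μs j) atTop
      (𝓝 (∫ l, ((l : ℂ) - I)⁻¹ ^ n ∂μ)))
    {φ : ℝ → ℂ} (hφ : Continuous φ) (hφs : HasCompactSupport φ) :
    Tendsto (fun j => ∫ l, φ l ∂μs j) atTop (𝓝 (∫ l, φ l ∂μ)) := by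
  let P : C(resolventCircle, ℂ) →L[ℂ] ℝ →ᵇ ℂ := (compContinuousCLM ℂ ℂ resolventMap).comp
    (ContinuousMap.linearIsometryBoundedOfCompact _ ℂ ℂ).toLinearIsometry.toContinuousLinearMap
  have hP : ∀ F l, P F l = F (resolventMap l) := fun _ _ => rfl
  let L := (tendstoIntegralSubmodule μs μ).comap P.toLinearMap
  have hmass : BddAbove (Set.range fun j => (μs j).real Set.univ) := by
    have := hplus 0
    simp only [pow_zero, integral_const, Complex.real_smul, mul_one] at this
    exact (tendsto_ofReal_iff.1 this).bddAbove_range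
  have hL : IsClosed (L : Set C(resolventCircle, ℂ)) :=
    (isClosed_tendstoIntegralSubmodule hmass).preimage P.continuous
  let z := ContinuousMap.restrict resolventCircle (ContinuousMap.id ℂ)
  have hz : z * star z = (I / 2) • (z - star z) := by
    ext w
    exact mul_conj_of_mem_resolventCircle w.2
  have hadjoin : Subalgebra.toSubmodule (StarAlgebra.adjoin ℂ {z}).toSubalgebra ≤ L := by
    refine StarAlgebra.adjoin_singleton_le_of_mul_star L hz (fun m => ?_) (fun n => ?_)
    · simpa [L, tendstoIntegralSubmodule, hP, z, resolventMap] using hplus m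
    · simpa [L, tendstoIntegralSubmodule, hP, z, resolventMap, sub_eq_add_neg] using hminus n
  obtain ⟨F, hF⟩ := exists_continuousMap_resolventCircle hφ hφs
  have hFL : F ∈ L := by
    have hF : F ∈ StarAlgebra.elemental ℂ z := by
      rw [ContinuousMap.elemental_id_eq_top]; trivial
    rw [StarAlgebra.elemental, ← SetLike.mem_coe, StarSubalgebra.topologicalClosure_coe] at hF
    exact hL.closure_subset_iff.2 hadjoin hF
  simpa [L, tendstoIntegralSubmodule, hP, hF] using hFL

section LowerEnvelope

variable {X : Type*} [PseudoMetricSpace X] {u : X → ℝ} {M : ℝ}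

noncomputable def lowerEnvelope (u : X → ℝ) (n : ℕ) (x : X) : ℝ :=
  ⨅ y, u y + (n + 1) * dist x y

lemma bddBelow_range_add_mul_dist (hM : ∀ x, |u x| ≤ M) (n : ℕ) (x : X) :
    BddBelow (Set.range fun y => u y + (n + 1) * dist x y) := by
  refine ⟨-M, ?_⟩
  rintro _ ⟨y, rfl⟩
  have := neg_le_of_abs_le (hM y)
  have : 0 ≤ ((n : ℝ) + 1) * dist x y := by positivity
  linarith

lemma lowerEnvelope_le (hM : ∀ x, |u x| ≤ M) (n : ℕ) (x : X) : lowerEnvelope u n x ≤ u x :=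
  (ciInf_le (bddBelow_range_add_mul_dist hM n x) x).trans_eq (by simp)

lemma abs_lowerEnvelope_le (hM : ∀ x, |u x| ≤ M) (n : ℕ) (x : X) :
    |lowerEnvelope u n x| ≤ M := by
  have : Nonempty X := ⟨x⟩
  refine abs_le.2 ⟨le_ciInf fun y => ?_,
    (lowerEnvelope_le hM n x).trans ((le_abs_self _).trans (hM x))⟩
  have := neg_le_of_abs_le (hM y)
  have : 0 ≤ ((n : ℝ) + 1) * dist x y := by positivity
  linarith

lemma lipschitzWith_lowerEnvelope (hM : ∀ x, |u x| ≤ M) (n : ℕ) :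
    LipschitzWith (n + 1) (lowerEnvelope u n) := by
  refine LipschitzWith.of_le_add_mul _ fun x x' => ?_
  have : Nonempty X := ⟨x⟩
  rw [← sub_le_iff_le_add]
  refine le_ciInf fun y => ?_
  have : lowerEnvelope u n x ≤ _ := ciInf_le (bddBelow_range_add_mul_dist hM n x) y
  have := dist_triangle x x' y
  have : (0 : ℝ) ≤ n + 1 := by positivity
  push_cast
  nlinarith

lemma continuous_lowerEnvelope (hM : ∀ x, |u x| ≤ M) (n : ℕ) : Continuous (lowerEnvelope u n) :=
  (lipschitzWith_lowerEnvelope hM n).continuous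

lemma lowerEnvelope_eq_zero (hM : ∀ x, |u x| ≤ M) {x : X} (hx : ∀ y, u y ≠ 0 → M < dist x y)
    (n : ℕ) : lowerEnvelope u n x = 0 := by
  have : Nonempty X := ⟨x⟩
  have hux : u x = 0 := by
    by_contra h
    linarith [hx x h, dist_self x, (abs_nonneg (u x)).trans (hM x)]
  refine le_antisymm ((lowerEnvelope_le hM n x).trans_eq hux) (le_ciInf fun y => ?_)
  by_cases hy : u y = 0
  · rw [hy, zero_add]; positivity
  · have := hx y hy
    have := neg_le_of_abs_le (hM y)
    have : dist x y ≤ (n + 1) * dist x y := le_mul_of_one_le_left dist_nonneg (by simp)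
    linarith

lemma hasCompactSupport_lowerEnvelope [ProperSpace X] (hM : ∀ x, |u x| ≤ M)
    (hu : HasCompactSupport u) (n : ℕ) : HasCompactSupport (lowerEnvelope u n) :=
  HasCompactSupport.intro (hu.isCompact.cthickening (r := M)) fun x hx =>
    lowerEnvelope_eq_zero hM (fun y hy => lt_of_not_ge fun h =>
      hx (Metric.mem_cthickening_of_dist_le x y M _ (subset_tsupport _ hy) h)) n

lemma tendsto_lowerEnvelope (hM : ∀ x, |u x| ≤ M) {x : X} (hx : ContinuousAt u x) :
    Tendsto (fun n => lowerEnvelope u n x) atTop (𝓝 (u x)) := by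
  refine tendsto_order.2 ⟨fun a ha => ?_,
    fun a ha => Eventually.of_forall fun n => (lowerEnvelope_le hM n x).trans_lt ha⟩
  obtain ⟨δ, hδ, hδu⟩ := Metric.continuousAt_iff.1 hx ((u x - a) / 2) (by linarith)
  obtain ⟨N, hN⟩ := exists_nat_gt (2 * M / δ)
  have : Nonempty X := ⟨x⟩
  filter_upwards [eventually_ge_atTop N] with n hn
  refine lt_of_lt_of_le (by linarith : a < (u x + a) / 2) (le_ciInf fun y => ?_)
  have hn' : 2 * M < (n + 1) * δ := by
    rw [div_lt_iff₀ hδ] at hN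
    nlinarith [(Nat.cast_le (α := ℝ)).2 hn]
  rcases lt_or_ge (dist y x) δ with hy | hy
  · have := (abs_lt.1 (Real.dist_eq _ _ ▸ hδu hy)).1
    have : 0 ≤ ((n : ℝ) + 1) * dist x y := by positivity
    linarith
  · have := neg_le_of_abs_le (hM y)
    have := (le_abs_self _).trans (hM x)
    rw [dist_comm] at hy
    nlinarith

end LowerEnvelope

section Sandwich

variable {X : Type*} [PseudoMetricSpace X] [ProperSpace X] [MeasurableSpace X]
  [OpensMeasurableSpace X] {μs : ℕ → Measure X} {μ : Measure X} [∀ j, IsFiniteMeasure (μs j)]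
  [IsFiniteMeasure μ]

lemma eventually_lt_integral_of_ae_continuousAt
    (h : ∀ φ : X → ℝ, Continuous φ → HasCompactSupport φ →
      Tendsto (fun j => ∫ x, φ x ∂μs j) atTop (𝓝 (∫ x, φ x ∂μ)))
    {u : X → ℝ} (hu : Measurable u) {M : ℝ} (hM : ∀ x, |u x| ≤ M) (hus : HasCompactSupport u)
    (huc : ∀ᵐ x ∂μ, ContinuousAt u x) {a : ℝ} (ha : a < ∫ x, u x ∂μ) :
    ∀ᶠ j in atTop, a < ∫ x, u x ∂μs j := by
  have hint : ∀ (ν : Measure X) [IsFiniteMeasure ν] (v : X → ℝ), AEStronglyMeasurable v ν →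
      (∀ x, |v x| ≤ M) → Integrable v ν := fun ν _ v hv hvM =>
    Integrable.of_bound hv M (ae_of_all _ hvM)
  have hlim : Tendsto (fun n => ∫ x, lowerEnvelope u n x ∂μ) atTop (𝓝 (∫ x, u x ∂μ)) :=
    tendsto_integral_of_dominated_convergence (fun _ => M)
      (fun n => (continuous_lowerEnvelope hM n).aestronglyMeasurable) (integrable_const M)
      (fun n => ae_of_all _ (abs_lowerEnvelope_le hM n))
      (huc.mono fun x hx => tendsto_lowerEnvelope hM hx)
  obtain ⟨n, hn⟩ := (hlim.eventually (lt_mem_nhds ha)).exists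
  filter_upwards [(h _ (continuous_lowerEnvelope hM n)
    (hasCompactSupport_lowerEnvelope hM hus n)).eventually (lt_mem_nhds hn)] with j hj
  exact hj.trans_le (integral_mono
    (hint _ _ (continuous_lowerEnvelope hM n).aestronglyMeasurable (abs_lowerEnvelope_le hM n))
    (hint _ _ hu.aestronglyMeasurable hM) (lowerEnvelope_le hM n))

theorem tendsto_integral_of_ae_continuousAt
    (h : ∀ φ : X → ℝ, Continuous φ → HasCompactSupport φ →
      Tendsto (fun j => ∫ x, φ x ∂μs j) atTop (𝓝 (∫ x, φ x ∂μ)))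
    {u : X → ℝ} (hu : Measurable u) {M : ℝ} (hM : ∀ x, |u x| ≤ M) (hus : HasCompactSupport u)
    (huc : ∀ᵐ x ∂μ, ContinuousAt u x) :
    Tendsto (fun j => ∫ x, u x ∂μs j) atTop (𝓝 (∫ x, u x ∂μ)) := by
  refine tendsto_order.2
    ⟨fun a ha => eventually_lt_integral_of_ae_continuousAt h hu hM hus huc ha, fun a ha => ?_⟩
  -- the upper bound is the lower bound for `-u`
  have := eventually_lt_integral_of_ae_continuousAt h hu.neg (by simpa using hM) hus.neg
    (huc.mono fun x hx => hx.neg) (a := -a) (by rw [Pi.neg_def, integral_neg]; linarith)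
  filter_upwards [this] with j hj
  rw [Pi.neg_def, integral_neg] at hj
  linarith

theorem tendsto_integral_of_ae_continuousAt_complex
    (h : ∀ φ : X → ℂ, Continuous φ → HasCompactSupport φ →
      Tendsto (fun j => ∫ x, φ x ∂μs j) atTop (𝓝 (∫ x, φ x ∂μ)))
    {f : X → ℂ} (hf : Measurable f) {M : ℝ} (hM : ∀ x, ‖f x‖ ≤ M) (hfs : HasCompactSupport f)
    (hfc : ∀ᵐ x ∂μ, ContinuousAt f x) :
    Tendsto (fun j => ∫ x, f x ∂μs j) atTop (𝓝 (∫ x, f x ∂μ)) := by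
  have hreal : ∀ φ : X → ℝ, Continuous φ → HasCompactSupport φ →
      Tendsto (fun j => ∫ x, φ x ∂μs j) atTop (𝓝 (∫ x, φ x ∂μ)) := fun φ hφ hφs => by
    simpa only [Function.comp_apply, integral_complex_ofReal, tendsto_ofReal_iff] using
      h _ (continuous_ofReal.comp hφ) (hφs.comp_left ofReal_zero)
  have hre := tendsto_integral_of_ae_continuousAt hreal (measurable_re.comp hf)
    (fun x => (abs_re_le_norm _).trans (hM x)) (hfs.comp_left zero_re)
    (hfc.mono fun x hx => continuous_re.continuousAt.comp hx)
  have him := tendsto_integral_of_ae_continuousAt hreal (measurable_im.comp hf)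
    (fun x => (abs_im_le_norm _).trans (hM x)) (hfs.comp_left zero_im)
    (hfc.mono fun x hx => continuous_im.continuousAt.comp hx)
  have hint : ∀ (ν : Measure X) [IsFiniteMeasure ν], Integrable f ν := fun ν _ =>
    Integrable.of_bound hf.aestronglyMeasurable M (ae_of_all _ hM)
  simp only [← integral_re_add_im (hint _)]
  exact hre.ofReal.add (him.ofReal.mul_const _)

end Sandwich

lemma HasCompactSupport.exists_norm_mul_le {X R : Type*} [TopologicalSpace X] [SeminormedRing R]
    {q g : X → R} (hq : Continuous q) (hg : HasCompactSupport g) {C : ℝ} (hgC : ∀ x, ‖g x‖ ≤ C) :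
    ∃ M, ∀ x, ‖q x * g x‖ ≤ M := by
  obtain ⟨B, hB⟩ := hg.isCompact.exists_bound_of_continuousOn hq.continuousOn
  refine ⟨max B 0 * C, fun x => (norm_mul_le _ _).trans ?_⟩
  by_cases hx : x ∈ tsupport g
  · exact mul_le_mul ((hB x hx).trans (le_max_left _ _)) (hgC x) (norm_nonneg _)
      (le_max_right _ _)
  · rw [image_eq_zero_of_notMem_tsupport hx, norm_zero, mul_zero]
    exact mul_nonneg (le_max_right _ _) ((norm_nonneg _).trans (hgC x))

structure IsWeightedDensity (ξ : ℝ → ℝ) : Prop where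
  measurable : Measurable ξ
  nonneg : ∀ l, 0 ≤ ξ l
  integrable : Integrable fun l => ξ l / (l ^ 2 + 1)

noncomputable def weightedMeasure (ξ : ℝ → ℝ) : Measure ℝ :=
  volume.withDensity fun l => ENNReal.ofReal (ξ l / (l ^ 2 + 1))

namespace IsWeightedDensity

variable {ξ : ℝ → ℝ}

lemma isFiniteMeasure (hξ : IsWeightedDensity ξ) : IsFiniteMeasure (weightedMeasure ξ) :=
  isFiniteMeasure_withDensity_ofReal hξ.integrable.2

lemma integral_weightedMeasure (hξ : IsWeightedDensity ξ) (φ : ℝ → ℂ) :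
    ∫ l, φ l ∂weightedMeasure ξ = ∫ l, (ξ l : ℂ) * ((l : ℂ) ^ 2 + 1)⁻¹ * φ l := by
  have hmeas : Measurable fun l => ENNReal.ofReal (ξ l / (l ^ 2 + 1)) := by
    have := hξ.measurable
    fun_prop
  rw [weightedMeasure, integral_withDensity_eq_integral_toReal_smul hmeas
    (ae_of_all _ fun _ => ENNReal.ofReal_lt_top)]
  refine integral_congr_ae (ae_of_all _ fun l => ?_)
  dsimp only
  rw [ENNReal.toReal_ofReal (div_nonneg (hξ.nonneg l) (by positivity)), Complex.real_smul]
  push_cast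
  ring

lemma integrable_mul (hξ : IsWeightedDensity ξ) {f : ℝ → ℂ} (hf : AEStronglyMeasurable f)
    {M : ℝ} (hM : ∀ l, ‖f l‖ ≤ M) :
    Integrable fun l => (ξ l : ℂ) * ((l : ℂ) ^ 2 + 1)⁻¹ * f l := by
  refine Integrable.mul_bdd ?_ hf (ae_of_all _ hM)
  refine (hξ.integrable.ofReal (𝕜 := ℂ)).congr (ae_of_all _ fun l => ?_)
  simp only [RCLike.ofReal_eq_complex_ofReal]
  push_cast
  ring

lemma integral_sub_mul {ξ₁ ξ₂ : ℝ → ℝ} (h₁ : IsWeightedDensity ξ₁)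
    (h₂ : IsWeightedDensity ξ₂) {g : ℝ → ℂ} (hg : AEStronglyMeasurable g) {M : ℝ}
    (hM : ∀ l : ℝ, ‖((l : ℂ) ^ 2 + 1) * g l‖ ≤ M) :
    ∫ l, ((ξ₁ l - ξ₂ l : ℝ) : ℂ) * g l =
      ∫ l, ((l : ℂ) ^ 2 + 1) * g l ∂weightedMeasure ξ₁ -
        ∫ l, ((l : ℂ) ^ 2 + 1) * g l ∂weightedMeasure ξ₂ := by
  have hf : AEStronglyMeasurable fun l : ℝ => ((l : ℂ) ^ 2 + 1) * g l :=
    (by fun_prop : Continuous fun l : ℝ => (l : ℂ) ^ 2 + 1).aestronglyMeasurable.mul hg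
  rw [h₁.integral_weightedMeasure, h₂.integral_weightedMeasure,
    ← integral_sub (h₁.integrable_mul hf hM) (h₂.integrable_mul hf hM)]
  refine integral_congr_ae (ae_of_all _ fun l => ?_)
  have : (l : ℂ) ^ 2 + 1 ≠ 0 := by exact_mod_cast (by positivity : l ^ 2 + 1 ≠ 0)
  field_simp
  push_cast
  ring

end IsWeightedDensity

theorem tendsto_integral_weightedMeasure {ξs : ℕ → ℝ → ℝ} {ξ : ℝ → ℝ}
    (hξs : ∀ j, IsWeightedDensity (ξs j)) (hξ : IsWeightedDensity ξ)
    (hplus : ∀ n : ℕ,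
      Tendsto (fun j => ∫ l : ℝ, (ξs j l : ℂ) * ((l : ℂ) ^ 2 + 1)⁻¹ * (((l : ℂ) + I)⁻¹) ^ n)
        atTop (𝓝 (∫ l : ℝ, (ξ l : ℂ) * ((l : ℂ) ^ 2 + 1)⁻¹ * (((l : ℂ) + I)⁻¹) ^ n)))
    (hminus : ∀ n : ℕ,
      Tendsto (fun j => ∫ l : ℝ, (ξs j l : ℂ) * ((l : ℂ) ^ 2 + 1)⁻¹ * (((l : ℂ) - I)⁻¹) ^ n)
        atTop (𝓝 (∫ l : ℝ, (ξ l : ℂ) * ((l : ℂ) ^ 2 + 1)⁻¹ * (((l : ℂ) - I)⁻¹) ^ n)))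
    {f : ℝ → ℂ} (hf : Measurable f) {M : ℝ} (hM : ∀ l, ‖f l‖ ≤ M) (hfs : HasCompactSupport f)
    (hfc : volume {l | ¬ ContinuousAt f l} = 0) :
    Tendsto (fun j => ∫ l, f l ∂weightedMeasure (ξs j)) atTop
      (𝓝 (∫ l, f l ∂weightedMeasure ξ)) := by
  have := fun j => (hξs j).isFiniteMeasure
  have := hξ.isFiniteMeasure
  have hint := fun j => (hξs j).integral_weightedMeasure
  refine tendsto_integral_of_ae_continuousAt_complex (fun φ hφ hφs => ?_) hf hM hfs
    ((withDensity_absolutelyContinuous _ _).ae_le (ae_iff.2 hfc))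
  refine tendsto_integral_of_tendsto_resolvent_moments (fun n => ?_) (fun n => ?_) hφ hφs
  · simpa only [hint, hξ.integral_weightedMeasure] using hplus n
  · simpa only [hint, hξ.integral_weightedMeasure] using hminus n

/-- Corollary 3.15: unweighted convergence against every bounded, compactly supported
Borel function that is continuous Lebesgue-almost everywhere. -/
theorem xi_convergence_compactly_supported_ae_continuous
    (ξp ξm : ℝ → ℝ) (ξjp ξjm : ℕ → ℝ → ℝ)
    (h : MomentCondition ξp ξm ξjp ξjm)
    (g : ℝ → ℂ) (hgmeas : Measurable g) (C : ℝ) (hgb : ∀ l : ℝ, ‖g l‖ ≤ C)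
    (hgsupp : HasCompactSupport g)
    (hgcont : volume {x : ℝ | ¬ ContinuousAt g x} = 0) :
    Tendsto
      (fun j => ∫ l : ℝ, ((ξjp j l - ξjm j l : ℝ) : ℂ) * g l)
      atTop
      (𝓝 (∫ l : ℝ, ((ξp l - ξm l : ℝ) : ℂ) * g l)) := by
  obtain ⟨hmp, hmm, hmjp, hmjm, hnp, hnm, hnjp, hnjm, hip, him, hijp, hijm, hmom⟩ := h
  have hp : IsWeightedDensity ξp := ⟨hmp, hnp, hip⟩
  have hm : IsWeightedDensity ξm := ⟨hmm, hnm, him⟩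
  have hjp j : IsWeightedDensity (ξjp j) := ⟨hmjp j, hnjp j, hijp j⟩
  have hjm j : IsWeightedDensity (ξjm j) := ⟨hmjm j, hnjm j, hijm j⟩
  -- the unweighted integrals of `g` are the weighted integrals of `(λ² + 1) g`
  have hq : Continuous fun l : ℝ => (l : ℂ) ^ 2 + 1 := by fun_prop
  obtain ⟨M, hM⟩ := hgsupp.exists_norm_mul_le hq hgb
  have hfc : volume {l | ¬ ContinuousAt (fun l : ℝ => ((l : ℂ) ^ 2 + 1) * g l) l} = 0 :=
    measure_mono_null (fun l hl hgl => hl (hq.continuousAt.mul hgl)) hgcont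
  have hf := hq.measurable.mul hgmeas
  simp only [hp.integral_sub_mul hm hgmeas.aestronglyMeasurable hM,
    fun j => (hjp j).integral_sub_mul (hjm j) hgmeas.aestronglyMeasurable hM]
  refine (tendsto_integral_weightedMeasure hjp hp (fun n => (hmom n).1) (fun n => (hmom n).2.1)
    hf hM hgsupp.mul_left hfc).sub ?_
  exact tendsto_integral_weightedMeasure hjm hm (fun n => (hmom n).2.2.1) (fun n => (hmom n).2.2.2)
    hf hM hgsupp.mul_left hfc
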